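/- Fix ε ∈ (0,1/2) and let M(x,ε) = H(min(1/2, H⁻¹(x) + ε)). Then there exists d > 0 such that M(x,ε) ≥ d + (1−d)·x for all x ∈ [0,1]. -/

import Mathlib

/-!
Put `c = 1/2 - ε` and `d = 1 - H(c)`, which is positive since `c ≠ 1/2`. By concavity of `H`,
the increment `H(p + ε) - H(p)` decreases in `p`, so for `p = H⁻¹(x) ≤ c` it is at least
`H(1/2) - H(c) = d`; hence `M(x, ε) ≥ x + d ≥ d + (1 - d) x`. For `p > c` we have `M(x, ε) = 1`.
-/

open Real

/-- The binary entropy function (base-2 logarithms). -/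
noncomputable def binH (p : ℝ) : ℝ := -(p * Real.logb 2 p + (1 - p) * Real.logb 2 (1 - p))

lemma binH_eq_binEntropy_div_log_two (p : ℝ) : binH p = binEntropy p / log 2 := by
  simp only [binH, binEntropy, logb, log_inv]
  ring

lemma binH_half : binH (1/2) = 1 := by
  rw [binH_eq_binEntropy_div_log_two, one_div, binEntropy_two_inv,
    div_self (log_pos one_lt_two).ne']

lemma binH_nonneg {p : ℝ} (hp₀ : 0 ≤ p) (hp₁ : p ≤ 1) : 0 ≤ binH p := by
  rw [binH_eq_binEntropy_div_log_two]
  exact div_nonneg (binEntropy_nonneg hp₀ hp₁) (log_pos one_lt_two).le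

lemma binH_lt_one {p : ℝ} (hp : p ≠ 1/2) : binH p < 1 := by
  rw [binH_eq_binEntropy_div_log_two, div_lt_one (log_pos one_lt_two),
    binEntropy_lt_log_two, ← one_div]
  exact hp

lemma strictAntiOn_binEntropy_add_sub {ε : ℝ} (hε : 0 < ε) :
    StrictAntiOn (fun p => binEntropy (p + ε) - binEntropy p) (Set.Icc 0 (1 - ε)) := by
  refine strictAntiOn_of_deriv_neg (convex_Icc _ _) (by fun_prop) fun p hp => ?_
  rw [interior_Icc] at hp
  obtain ⟨hp₀, hp₁⟩ := hp
  have hpε₀ : 0 < p + ε := by linarith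
  have hderiv : HasDerivAt (fun p => binEntropy (p + ε) - binEntropy p)
      ((log (1 - (p + ε)) - log (p + ε)) - (log (1 - p) - log p)) p := by
    have hshift := (hasDerivAt_binEntropy hpε₀.ne' (by linarith)).comp p
      ((hasDerivAt_id p).add_const ε)
    rw [mul_one] at hshift
    exact hshift.sub (hasDerivAt_binEntropy hp₀.ne' (by linarith))
  rw [hderiv.deriv]
  -- the derivative is `log ((1 - p - ε) p / ((1 - p) (p + ε)))`, and the ratio is `< 1` as `ε > 0`
  have hratio := log_lt_log (by nlinarith) (show (1 - (p + ε)) * p < (1 - p) * (p + ε) by nlinarith)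
  rw [log_mul (by linarith) hp₀.ne', log_mul (by linarith) hpε₀.ne'] at hratio
  linarith

lemma one_sub_binH_le_binH_add_sub {ε p : ℝ} (hε : 0 < ε) (hp₀ : 0 ≤ p) (hpε : p + ε ≤ 1/2) :
    1 - binH (1/2 - ε) ≤ binH (p + ε) - binH p := by
  have hanti := (strictAntiOn_binEntropy_add_sub hε).antitoneOn
    ⟨hp₀, by linarith⟩ ⟨by linarith, by linarith⟩ (show p ≤ 1/2 - ε by linarith)
  rw [sub_add_cancel] at hanti
  have hscaled : binH (1/2) - binH (1/2 - ε) ≤ binH (p + ε) - binH p := by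
    simp only [binH_eq_binEntropy_div_log_two, ← sub_div]
    exact div_le_div_of_nonneg_right hanti (log_pos one_lt_two).le
  rwa [binH_half] at hscaled

theorem stmt17_general (g : ℝ → ℝ)
    (hg_right : ∀ x ∈ Set.Icc (0:ℝ) 1, binH (g x) = x ∧ g x ∈ Set.Icc (0:ℝ) (1/2))
    (ε : ℝ) (hε : ε ∈ Set.Ioo (0:ℝ) (1/2)) :
    ∃ d : ℝ, 0 < d ∧ ∀ x ∈ Set.Icc (0:ℝ) 1,
      d + (1 - d) * x ≤ binH (min (1/2) (g x + ε)) := by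
  obtain ⟨hε₀, hε₁⟩ := hε
  have hd₀ : 0 < 1 - binH (1/2 - ε) := sub_pos.2 (binH_lt_one (by linarith))
  have hd₁ : 0 ≤ binH (1/2 - ε) := binH_nonneg (by linarith) (by linarith)
  refine ⟨1 - binH (1/2 - ε), hd₀, fun x hx => ?_⟩
  obtain ⟨hgx, hg₀, -⟩ := hg_right x hx
  rcases le_or_gt (g x + ε) (1/2) with hle | hgt
  · rw [min_eq_right hle]
    have hincr := one_sub_binH_le_binH_add_sub hε₀ hg₀ hle
    rw [hgx] at hincr
    nlinarith [hx.1]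
  · rw [min_eq_left hgt.le, binH_half]
    nlinarith [hx.2]

theorem stmt17 (g : ℝ → ℝ)
    (hg_left : ∀ p ∈ Set.Icc (0:ℝ) (1/2), g (binH p) = p)
    (hg_right : ∀ x ∈ Set.Icc (0:ℝ) 1, binH (g x) = x ∧ g x ∈ Set.Icc (0:ℝ) (1/2))
    (ε : ℝ) (hε : ε ∈ Set.Ioo (0:ℝ) (1/2)) :
    ∃ d : ℝ, 0 < d ∧ ∀ x ∈ Set.Icc (0:ℝ) 1,
      d + (1 - d) * x ≤ binH (min (1/2) (g x + ε)) :=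
  stmt17_general g hg_right ε hε
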